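/- arXiv:2011.03396 — 2 statements merged into one kernel-verified Lean document; each statement's English description precedes it below -/
import Mathlib

section
/- Let λ > 0 and for μ ∈ ℝ let Λ(μ, λ) denote the Laplace probability measure on ℝ with density x ↦ (1/(2λ)) · exp(−|x − μ|/λ) with respect to Lebesgue measure. Let s₁, …, s_n (n ≥ 2) be real numbers (the secrets). Then the Bayes security of the Laplace mechanism s ↦ s + Λ(0, λ) equals β* = exp(− max_{i, j} |s_i − s_j| / (2λ)); precisely, min over pairs i ≠ j of (1 − tv(Λ(s_i, λ), Λ(s_j, λ))) = exp(− max_{i, j} |s_i − s_j| / (2λ)), where tv(P, Q) denotes the total variation distance sup over measurable sets A of (P(A) − Q(A)). In particular, for any μ_p, μ_q ∈ ℝ, tv(Λ(μ_p, λ), Λ(μ_q, λ)) = 1 − exp(−|μ_p − μ_q|/(2λ)). -/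
open MeasureTheory

/-- The Laplace measure `Λ(μ, λ)` on `ℝ`, with density `x ↦ (1/(2λ))·exp(−|x − μ|/λ)`
with respect to Lebesgue measure. -/
noncomputable def laplaceMeasure (μ lam : ℝ) : Measure ℝ :=
  volume.withDensity fun x => ENNReal.ofReal ((1 / (2 * lam)) * Real.exp (-|x - μ| / lam))

/-- Total variation distance: `tv(P, Q) = sup_{A measurable} (P(A) − Q(A))`. -/
noncomputable def tvDist (P Q : Measure ℝ) : ℝ :=
  ⨆ A : {A : Set ℝ // MeasurableSet A}, ((P A.1).toReal - (Q A.1).toReal)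

/-!
If `f` and `g` are densities and `S` is a measurable set with `f ≥ g` on `S` and
`f ≤ g` off `S`, then `S` maximises `P(A) − Q(A)`, so `tv(P, Q) = ∫_S (f − g)`. For Laplace densities
centred at `a ≤ b` such a set is the half-line `(-∞, m]` left of the midpoint `m = (a + b)/2`, and
the explicit distribution function gives `tv = 1 − exp(−|a − b|/(2λ))`. Since `t ↦ exp(−t/(2λ))` is
antitone, the minimum of `1 − tv` over pairs of distinct secrets is attained at the pair of maximal
distance.
-/

open Real Set

lemma abs_sub_le_abs_sub_iff {a b x : ℝ} : |x - a| ≤ |x - b| ↔ (a - b) * (a + b - 2 * x) ≤ 0 := by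
  rw [← sq_le_sq]
  constructor <;> intro h <;> nlinarith

lemma Antitone.map_finset_sup' {α β ι : Type*} [LinearOrder α] [LinearOrder β] {φ : α → β}
    (hφ : Antitone φ) {s : Finset ι} (hs : s.Nonempty) (f : ι → α) :
    φ (s.sup' hs f) = s.inf' hs (φ ∘ f) :=
  Finset.apply_sup'_eq_sup'_comp (γ := βᵒᵈ) hs (OrderDual.toDual ∘ φ) fun _ _ => hφ.map_max

lemma Finset.sup'_univ_abs_sub_eq_sup'_ne {ι : Type*} [Fintype ι] [DecidableEq ι] (s : ι → ℝ)
    (huniv : (univ : Finset (ι × ι)).Nonempty)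
    (hne : (univ.filter fun p : ι × ι => p.1 ≠ p.2).Nonempty) :
    univ.sup' huniv (fun p : ι × ι => |s p.1 - s p.2|)
      = (univ.filter fun p : ι × ι => p.1 ≠ p.2).sup' hne (fun p => |s p.1 - s p.2|) := by
  refine le_antisymm (sup'_le _ _ fun p _ => ?_) (sup'_mono _ (filter_subset _ _) hne)
  by_cases hp : p.1 = p.2
  · obtain ⟨q, hq⟩ := hne
    rw [hp, sub_self, abs_zero]
    exact (abs_nonneg _).trans (le_sup' (fun p : ι × ι => |s p.1 - s p.2|) hq)
  · exact le_sup' (fun p : ι × ι => |s p.1 - s p.2|) (mem_filter.2 ⟨mem_univ p, hp⟩)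

lemma toReal_withDensity_ofReal_apply {ν : Measure ℝ} {f : ℝ → ℝ} (hf : Integrable f ν)
    (hf₀ : 0 ≤ f) {A : Set ℝ} (hA : MeasurableSet A) :
    (ν.withDensity (fun x => ENNReal.ofReal (f x)) A).toReal = ∫ x in A, f x ∂ν := by
  rw [withDensity_apply _ hA, ← ofReal_integral_eq_lintegral_ofReal hf.integrableOn
    (Filter.Eventually.of_forall hf₀), ENNReal.toReal_ofReal (setIntegral_nonneg hA fun x _ => hf₀ x)]

lemma tvDist_withDensity_eq_setIntegral {ν : Measure ℝ} {f g : ℝ → ℝ} (hf : Integrable f ν)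
    (hg : Integrable g ν) (hf₀ : 0 ≤ f) (hg₀ : 0 ≤ g) {S : Set ℝ} (hS : MeasurableSet S)
    (hgf : ∀ x ∈ S, g x ≤ f x) (hfg : ∀ x ∉ S, f x ≤ g x) :
    tvDist (ν.withDensity fun x => ENNReal.ofReal (f x))
        (ν.withDensity fun x => ENNReal.ofReal (g x)) = ∫ x in S, f x - g x ∂ν := by
  have hdiff (A : Set ℝ) (hA : MeasurableSet A) :
      (ν.withDensity (fun x => ENNReal.ofReal (f x)) A).toReal
        - (ν.withDensity (fun x => ENNReal.ofReal (g x)) A).toReal = ∫ x in A, f x - g x ∂ν := by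
    rw [toReal_withDensity_ofReal_apply hf hf₀ hA, toReal_withDensity_ofReal_apply hg hg₀ hA,
      integral_sub hf.integrableOn hg.integrableOn]
  have hle (A : {A : Set ℝ // MeasurableSet A}) :
      (ν.withDensity (fun x => ENNReal.ofReal (f x)) A.1).toReal
        - (ν.withDensity (fun x => ENNReal.ofReal (g x)) A.1).toReal ≤ ∫ x in S, f x - g x ∂ν := by
    obtain ⟨A, hA⟩ := A
    have hint : Integrable (fun x => f x - g x) ν := hf.sub hg
    have hout : ∫ x in A \ S, f x - g x ∂ν ≤ 0 :=
      setIntegral_nonpos (hA.diff hS) fun x hx => sub_nonpos.2 (hfg x hx.2)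
    have hin : ∫ x in A ∩ S, f x - g x ∂ν ≤ ∫ x in S, f x - g x ∂ν :=
      setIntegral_mono_set hint.integrableOn
        ((ae_restrict_iff' hS).2 (Filter.Eventually.of_forall fun x hx => sub_nonneg.2 (hgf x hx)))
        inter_subset_right.eventuallyLE
    rw [hdiff A hA, ← integral_inter_add_sdiff hS hint.integrableOn]
    linarith
  have : Nonempty {A : Set ℝ // MeasurableSet A} := ⟨⟨S, hS⟩⟩
  exact le_antisymm (ciSup_le hle)
    (le_ciSup_of_le ⟨_, forall_mem_range.2 hle⟩ ⟨S, hS⟩ (hdiff S hS).ge)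

noncomputable def laplacePDF (μ lam x : ℝ) : ℝ := (1 / (2 * lam)) * exp (-|x - μ| / lam)

section laplacePDF

variable {μ lam : ℝ}

lemma laplaceMeasure_eq_withDensity (μ lam : ℝ) :
    laplaceMeasure μ lam = volume.withDensity fun x => ENNReal.ofReal (laplacePDF μ lam x) :=
  rfl

lemma laplacePDF_nonneg (hlam : 0 ≤ lam) : 0 ≤ laplacePDF μ lam := fun x => by
  unfold laplacePDF; positivity

lemma laplacePDF_le_laplacePDF (hlam : 0 < lam) {a b x : ℝ} (h : |x - a| ≤ |x - b|) :
    laplacePDF b lam x ≤ laplacePDF a lam x := by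
  unfold laplacePDF; gcongr

lemma laplacePDF_of_le {x : ℝ} (hx : x ≤ μ) :
    laplacePDF μ lam x = exp (-μ / lam) / (2 * lam) * exp (lam⁻¹ * x) := by
  rw [laplacePDF, abs_of_nonpos (sub_nonpos.2 hx),
    show -(-(x - μ)) / lam = -μ / lam + lam⁻¹ * x by ring, exp_add]
  ring

lemma laplacePDF_of_ge {x : ℝ} (hx : μ ≤ x) :
    laplacePDF μ lam x = exp (μ / lam) / (2 * lam) * exp (-lam⁻¹ * x) := by
  rw [laplacePDF, abs_of_nonneg (sub_nonneg.2 hx),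
    show -(x - μ) / lam = μ / lam + -lam⁻¹ * x by ring, exp_add]
  ring

lemma integrableOn_laplacePDF_Iic (hlam : 0 < lam) {a : ℝ} (ha : a ≤ μ) :
    IntegrableOn (laplacePDF μ lam) (Iic a) :=
  IntegrableOn.congr_fun ((integrableOn_exp_mul_Iic (inv_pos.2 hlam) a).const_mul _)
    (fun _ hx => (laplacePDF_of_le (le_trans hx ha)).symm) measurableSet_Iic

lemma integrableOn_laplacePDF_Ioi (hlam : 0 < lam) {a : ℝ} (ha : μ ≤ a) :
    IntegrableOn (laplacePDF μ lam) (Ioi a) :=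
  IntegrableOn.congr_fun ((integrableOn_exp_mul_Ioi (neg_lt_zero.2 (inv_pos.2 hlam)) a).const_mul _)
    (fun _ hx => (laplacePDF_of_ge (le_trans ha (le_of_lt hx))).symm) measurableSet_Ioi

lemma integrable_laplacePDF (hlam : 0 < lam) : Integrable (laplacePDF μ lam) := by
  rw [← integrableOn_univ, ← Iic_union_Ioi (a := μ)]
  exact (integrableOn_laplacePDF_Iic hlam le_rfl).union (integrableOn_laplacePDF_Ioi hlam le_rfl)

lemma setIntegral_laplacePDF_Iic (hlam : 0 < lam) {a : ℝ} (ha : a ≤ μ) :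
    ∫ x in Iic a, laplacePDF μ lam x = exp ((a - μ) / lam) / 2 := by
  rw [setIntegral_congr_fun measurableSet_Iic fun x hx => laplacePDF_of_le (le_trans hx ha),
    integral_const_mul, integral_exp_mul_Iic (inv_pos.2 hlam),
    show (a - μ) / lam = -μ / lam + lam⁻¹ * a by ring, exp_add]
  field_simp

lemma setIntegral_laplacePDF_Ioi (hlam : 0 < lam) {a : ℝ} (ha : μ ≤ a) :
    ∫ x in Ioi a, laplacePDF μ lam x = exp (-(a - μ) / lam) / 2 := by
  rw [setIntegral_congr_fun measurableSet_Ioi fun x hx => laplacePDF_of_ge (le_trans ha hx.le),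
    integral_const_mul, integral_exp_mul_Ioi (neg_lt_zero.2 (inv_pos.2 hlam)),
    show -(a - μ) / lam = μ / lam + -lam⁻¹ * a by ring, exp_add]
  field_simp

lemma setIntegral_laplacePDF_Iic_add_Ioi (hlam : 0 < lam) (a : ℝ) :
    (∫ x in Iic a, laplacePDF μ lam x) + ∫ x in Ioi a, laplacePDF μ lam x = 1 := by
  rw [← compl_Iic, integral_add_compl measurableSet_Iic (integrable_laplacePDF hlam),
    ← integral_add_compl measurableSet_Iic (integrable_laplacePDF hlam) (s := Iic μ), compl_Iic,
    setIntegral_laplacePDF_Iic hlam le_rfl, setIntegral_laplacePDF_Ioi hlam le_rfl]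
  norm_num

end laplacePDF

section tvDist

variable {lam μp μq : ℝ}

lemma tvDist_laplaceMeasure_of_le (hlam : 0 < lam) (h : μp ≤ μq) :
    tvDist (laplaceMeasure μp lam) (laplaceMeasure μq lam) = 1 - exp (-(μq - μp) / (2 * lam)) := by
  obtain ⟨m, hm⟩ : ∃ m, m = (μp + μq) / 2 := ⟨_, rfl⟩
  have hp := integrable_laplacePDF (μ := μp) hlam
  have hq := integrable_laplacePDF (μ := μq) hlam
  have hp_total := setIntegral_laplacePDF_Iic_add_Ioi (μ := μp) hlam m
  rw [setIntegral_laplacePDF_Ioi hlam (by linarith : μp ≤ m),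
    show -(m - μp) / lam = -(μq - μp) / (2 * lam) by rw [hm]; ring] at hp_total
  rw [laplaceMeasure_eq_withDensity, laplaceMeasure_eq_withDensity,
    tvDist_withDensity_eq_setIntegral hp hq (laplacePDF_nonneg hlam.le)
      (laplacePDF_nonneg hlam.le) (measurableSet_Iic (a := m))
      (fun x hx => laplacePDF_le_laplacePDF hlam
        (abs_sub_le_abs_sub_iff.2 (by nlinarith [mem_Iic.1 hx, hm])))
      (fun x hx => laplacePDF_le_laplacePDF hlam
        (abs_sub_le_abs_sub_iff.2 (by nlinarith [notMem_Iic.1 hx, hm]))),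
    integral_sub hp.integrableOn hq.integrableOn,
    setIntegral_laplacePDF_Iic hlam (by linarith : m ≤ μq),
    show (m - μq) / lam = -(μq - μp) / (2 * lam) by rw [hm]; ring]
  linarith

lemma tvDist_laplaceMeasure_of_ge (hlam : 0 < lam) (h : μq ≤ μp) :
    tvDist (laplaceMeasure μp lam) (laplaceMeasure μq lam) = 1 - exp (-(μp - μq) / (2 * lam)) := by
  obtain ⟨m, hm⟩ : ∃ m, m = (μp + μq) / 2 := ⟨_, rfl⟩
  have hp := integrable_laplacePDF (μ := μp) hlam
  have hq := integrable_laplacePDF (μ := μq) hlam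
  have hp_total := setIntegral_laplacePDF_Iic_add_Ioi (μ := μp) hlam m
  rw [setIntegral_laplacePDF_Iic hlam (by linarith : m ≤ μp),
    show (m - μp) / lam = -(μp - μq) / (2 * lam) by rw [hm]; ring] at hp_total
  rw [laplaceMeasure_eq_withDensity, laplaceMeasure_eq_withDensity,
    tvDist_withDensity_eq_setIntegral hp hq (laplacePDF_nonneg hlam.le)
      (laplacePDF_nonneg hlam.le) (measurableSet_Ioi (a := m))
      (fun x hx => laplacePDF_le_laplacePDF hlam
        (abs_sub_le_abs_sub_iff.2 (by nlinarith [mem_Ioi.1 hx, hm])))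
      (fun x hx => laplacePDF_le_laplacePDF hlam
        (abs_sub_le_abs_sub_iff.2 (by nlinarith [notMem_Ioi.1 hx, hm]))),
    integral_sub hp.integrableOn hq.integrableOn,
    setIntegral_laplacePDF_Ioi hlam (by linarith : μq ≤ m),
    show -(m - μq) / lam = -(μp - μq) / (2 * lam) by rw [hm]; ring]
  linarith

theorem tvDist_laplaceMeasure (hlam : 0 < lam) (μp μq : ℝ) :
    tvDist (laplaceMeasure μp lam) (laplaceMeasure μq lam) = 1 - exp (-|μp - μq| / (2 * lam)) := by
  rcases le_total μp μq with h | h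
  · rw [tvDist_laplaceMeasure_of_le hlam h, abs_sub_comm, abs_of_nonneg (sub_nonneg.2 h)]
  · rw [tvDist_laplaceMeasure_of_ge hlam h, abs_of_nonneg (sub_nonneg.2 h)]

end tvDist

/-- the Bayes security of the Laplace mechanism with secrets `s 0, …, s (n-1)`
is `exp(− max_{i,j} |s i − s j| / (2λ))`; in particular
`tv(Λ(μ_p, λ), Λ(μ_q, λ)) = 1 − exp(−|μ_p − μ_q|/(2λ))`. -/
theorem laplace_bayes_security (lam : ℝ) (hlam : 0 < lam) (n : ℕ) (hn : 2 ≤ n)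
    (s : Fin n → ℝ) :
    ((Finset.univ.filter fun p : Fin n × Fin n => p.1 ≠ p.2).inf'
        ⟨(⟨0, by omega⟩, ⟨1, by omega⟩), by simp [Fin.ext_iff]⟩
        (fun p => 1 - tvDist (laplaceMeasure (s p.1) lam) (laplaceMeasure (s p.2) lam)))
      = Real.exp (-(Finset.univ.sup' ⟨(⟨0, by omega⟩, ⟨0, by omega⟩), Finset.mem_univ _⟩
            (fun p : Fin n × Fin n => |s p.1 - s p.2|)) / (2 * lam)) ∧
    ∀ μp μq : ℝ, tvDist (laplaceMeasure μp lam) (laplaceMeasure μq lam)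
      = 1 - Real.exp (-|μp - μq| / (2 * lam)) := by
  refine ⟨?_, tvDist_laplaceMeasure hlam⟩
  have hanti : Antitone fun t : ℝ => exp (-t / (2 * lam)) := fun a b hab => by
    dsimp only
    gcongr
  have hne : (Finset.univ.filter fun p : Fin n × Fin n => p.1 ≠ p.2).Nonempty :=
    ⟨(⟨0, by omega⟩, ⟨1, by omega⟩), by simp [Fin.ext_iff]⟩
  have key := hanti.map_finset_sup' hne fun p => |s p.1 - s p.2|
  rw [← Finset.sup'_univ_abs_sub_eq_sup'_ne s (hne.mono (Finset.filter_subset _ _))] at key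
  simp_rw [tvDist_laplaceMeasure hlam, sub_sub_cancel]
  exact key.symm
end

section
/- Let σ > 0 and μ_p, μ_q ∈ ℝ, and let N(μ, σ²) denote the Gaussian probability measure on ℝ with mean μ and variance σ². Then the total variation distance between N(μ_p, σ²) and N(μ_q, σ²) equals Φ(α) − Φ(−α), where Φ is the cumulative distribution function of the standard Gaussian N(0, 1) and α = |μ_p − μ_q| / (2σ); equivalently, sup over Borel sets A of (N(μ_p, σ²)(A) − N(μ_q, σ²)(A)) equals the N(0, 1)-measure of the interval [−α, α]. -/
/-!
For `a ≤ b` the density of `N(a, v)` dominates that of `N(b, v)` exactly left of the midpoint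
`m = (a + b) / 2`, so `Iic m` is a Hahn set for `N(a, v) - N(b, v)` and the supremum defining the
total variation is attained there (Scheffé). Standardizing, the two masses of `Iic m` are `Φ(α)`
and `Φ(-α)`. The case `b ≤ a` follows since `tvDist` is symmetric on probability measures
(pass to complements).
-/

open MeasureTheory ProbabilityTheory

/-- The cumulative distribution function `Φ` of the standard Gaussian `N(0, 1)`. -/
noncomputable def stdGaussianCDF (x : ℝ) : ℝ :=
  (gaussianReal 0 1 (Set.Iic x)).toReal

open Set
open scoped NNReal

lemma bddAbove_measureReal_sub (P Q : Measure ℝ) [IsFiniteMeasure P] :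
    BddAbove (range fun A : {A : Set ℝ // MeasurableSet A} => (P A.1).toReal - (Q A.1).toReal) :=
  ⟨P.real univ, by
    rintro _ ⟨A, rfl⟩
    exact (sub_le_self _ ENNReal.toReal_nonneg).trans (measureReal_mono (subset_univ A.1))⟩

lemma le_tvDist (P Q : Measure ℝ) [IsFiniteMeasure P] {A : Set ℝ} (hA : MeasurableSet A) :
    P.real A - Q.real A ≤ tvDist P Q :=
  le_ciSup (bddAbove_measureReal_sub P Q) (⟨A, hA⟩ : {A : Set ℝ // MeasurableSet A})

lemma tvDist_le {P Q : Measure ℝ} {c : ℝ} (h : ∀ A, MeasurableSet A → P.real A - Q.real A ≤ c) :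
    tvDist P Q ≤ c :=
  have : Nonempty {A : Set ℝ // MeasurableSet A} := ⟨⟨∅, .empty⟩⟩
  ciSup_le fun A => h A.1 A.2

lemma tvDist_comm (P Q : Measure ℝ) [IsProbabilityMeasure P] [IsProbabilityMeasure Q] :
    tvDist P Q = tvDist Q P := by
  suffices h : ∀ (P Q : Measure ℝ) [IsProbabilityMeasure P] [IsProbabilityMeasure Q],
      tvDist P Q ≤ tvDist Q P from le_antisymm (h P Q) (h Q P)
  intro P Q _ _
  refine tvDist_le fun A hA => ?_
  calc P.real A - Q.real A = Q.real Aᶜ - P.real Aᶜ := by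
        rw [probReal_compl_eq_one_sub hA, probReal_compl_eq_one_sub hA]; ring
    _ ≤ tvDist Q P := le_tvDist Q P hA.compl

lemma tvDist_eq_of_restrict_le {P Q : Measure ℝ} [IsFiniteMeasure P] [IsFiniteMeasure Q]
    {S : Set ℝ} (hS : MeasurableSet S) (hS_pos : Q.restrict S ≤ P.restrict S)
    (hS_neg : P.restrict Sᶜ ≤ Q.restrict Sᶜ) :
    tvDist P Q = P.real S - Q.real S := by
  refine le_antisymm (tvDist_le fun A hA => ?_) (le_tvDist P Q hS)
  have h_out : P.real (A \ S) ≤ Q.real (A \ S) := by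
    have h := Measure.le_iff'.1 hS_neg A
    rw [Measure.restrict_apply hA, Measure.restrict_apply hA, ← sdiff_eq] at h
    exact ENNReal.toReal_mono (measure_ne_top _ _) h
  have h_in : Q.real (S \ A) ≤ P.real (S \ A) := by
    have h := Measure.le_iff'.1 hS_pos Aᶜ
    rw [Measure.restrict_apply hA.compl, Measure.restrict_apply hA.compl, inter_comm,
      ← sdiff_eq] at h
    exact ENNReal.toReal_mono (measure_ne_top _ _) h
  have hPA := measureReal_inter_add_sdiff (μ := P) (s := A) hS
  have hQA := measureReal_inter_add_sdiff (μ := Q) (s := A) hS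
  have hPS := measureReal_inter_add_sdiff (μ := P) (s := S) hA
  have hQS := measureReal_inter_add_sdiff (μ := Q) (s := S) hA
  rw [inter_comm] at hPS hQS
  linarith

lemma stdGaussianCDF_sub_stdGaussianCDF {a b : ℝ} (hab : a ≤ b) :
    stdGaussianCDF b - stdGaussianCDF a = (gaussianReal 0 1).real (Icc a b) := by
  have := nullSingletonClass_gaussianReal (μ := 0) one_ne_zero
  rw [← measureReal_congr Ioc_ae_eq_Icc, ← Iic_sdiff_Iic,
    measureReal_sdiff (Iic_subset_Iic.2 hab) measurableSet_Iic]
  rfl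

section Gaussian

variable {v : ℝ≥0}

lemma gaussianPDFReal_le_gaussianPDFReal_iff (hv : v ≠ 0) (a b x : ℝ) :
    gaussianPDFReal a v x ≤ gaussianPDFReal b v x ↔ (x - b) ^ 2 ≤ (x - a) ^ 2 := by
  have hv' : (0 : ℝ) < v := NNReal.coe_pos.2 (pos_iff_ne_zero.2 hv)
  simp only [gaussianPDFReal]
  rw [mul_le_mul_iff_of_pos_left (by positivity), Real.exp_le_exp, neg_div, neg_div,
    neg_le_neg_iff, div_le_div_iff_of_pos_right (by positivity)]

lemma gaussianReal_restrict_le (hv : v ≠ 0) {a b : ℝ} {S : Set ℝ}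
    (hS : MeasurableSet S) (h : ∀ x ∈ S, (x - b) ^ 2 ≤ (x - a) ^ 2) :
    (gaussianReal a v).restrict S ≤ (gaussianReal b v).restrict S := by
  rw [gaussianReal_of_var_ne_zero _ hv, gaussianReal_of_var_ne_zero _ hv,
    restrict_withDensity hS, restrict_withDensity hS]
  refine withDensity_mono ((ae_restrict_iff' hS).2 (ae_of_all _ fun x hx => ?_))
  exact ENNReal.ofReal_le_ofReal ((gaussianPDFReal_le_gaussianPDFReal_iff hv a b x).2 (h x hx))

lemma gaussianReal_map_standardize (hv : v ≠ 0) (μ : ℝ) :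
    (gaussianReal μ v).map (fun x => (x - μ) / √v) = gaussianReal 0 1 := by
  have h : (fun x => (x - μ) / √v) = (fun x => x / √v) ∘ (fun x => x - μ) := rfl
  rw [h, ← Measure.map_map (by fun_prop) (by fun_prop), gaussianReal_map_sub_const,
    gaussianReal_map_div_const, sub_self, zero_div]
  congr
  have h_sq : NNReal.mk (√v ^ 2) (sq_nonneg _) = v := NNReal.eq (Real.sq_sqrt v.2)
  rw [h_sq, div_self hv]

lemma gaussianReal_real_Iic (hv : v ≠ 0) (μ c : ℝ) :
    (gaussianReal μ v).real (Iic c) = stdGaussianCDF ((c - μ) / √v) := by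
  have hσ : 0 < √(v : ℝ) := Real.sqrt_pos.2 (NNReal.coe_pos.2 (pos_iff_ne_zero.2 hv))
  rw [stdGaussianCDF, ← gaussianReal_map_standardize hv μ,
    ← measureReal_def, map_measureReal_apply (by fun_prop) measurableSet_Iic]
  congr 1
  ext x
  simp only [mem_preimage, mem_Iic, div_le_div_iff_of_pos_right hσ, sub_le_sub_iff_right]

lemma tvDist_gaussianReal_of_le (hv : v ≠ 0) {a b : ℝ} (hab : a ≤ b) :
    tvDist (gaussianReal a v) (gaussianReal b v)
      = stdGaussianCDF ((b - a) / (2 * √v)) - stdGaussianCDF (-((b - a) / (2 * √v))) := by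
  have h_left : ∀ x ∈ Iic ((a + b) / 2), (x - a) ^ 2 ≤ (x - b) ^ 2 := fun x hx => by
    nlinarith [mem_Iic.1 hx]
  have h_right : ∀ x ∈ (Iic ((a + b) / 2))ᶜ, (x - b) ^ 2 ≤ (x - a) ^ 2 := fun x hx => by
    nlinarith [notMem_Iic.1 hx]
  rw [tvDist_eq_of_restrict_le measurableSet_Iic (gaussianReal_restrict_le hv measurableSet_Iic
    h_left) (gaussianReal_restrict_le hv measurableSet_Iic.compl h_right),
    gaussianReal_real_Iic hv, gaussianReal_real_Iic hv]
  congr 2 <;> field_simp <;> ring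

end Gaussian

/-- for Gaussians of common variance `σ²`,
`tv(N(μ_p, σ²), N(μ_q, σ²)) = Φ(α) − Φ(−α)` with `α = |μ_p − μ_q|/(2σ)`; equivalently it
equals the `N(0,1)`-measure of the interval `[−α, α]`. -/
theorem gaussian_tv (σ : ℝ) (hσ : 0 < σ) (μp μq : ℝ) :
    tvDist (gaussianReal μp ⟨σ ^ 2, sq_nonneg σ⟩) (gaussianReal μq ⟨σ ^ 2, sq_nonneg σ⟩)
        = stdGaussianCDF (|μp - μq| / (2 * σ)) - stdGaussianCDF (-(|μp - μq| / (2 * σ))) ∧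
    tvDist (gaussianReal μp ⟨σ ^ 2, sq_nonneg σ⟩) (gaussianReal μq ⟨σ ^ 2, sq_nonneg σ⟩)
        = (gaussianReal 0 1
            (Set.Icc (-(|μp - μq| / (2 * σ))) (|μp - μq| / (2 * σ)))).toReal := by
  set v : ℝ≥0 := ⟨σ ^ 2, sq_nonneg σ⟩
  have hv : v ≠ 0 := fun h => (pow_pos hσ 2).ne' (congrArg NNReal.toReal h)
  have hσv : √(v : ℝ) = σ := Real.sqrt_sq hσ.le
  have h_cdf : tvDist (gaussianReal μp v) (gaussianReal μq v)
      = stdGaussianCDF (|μp - μq| / (2 * σ)) - stdGaussianCDF (-(|μp - μq| / (2 * σ))) := by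
    rcases le_total μp μq with h | h
    · rw [tvDist_gaussianReal_of_le hv h, hσv, abs_sub_comm, abs_of_nonneg (sub_nonneg.2 h)]
    · rw [tvDist_comm, tvDist_gaussianReal_of_le hv h, hσv, abs_of_nonneg (sub_nonneg.2 h)]
  exact ⟨h_cdf, h_cdf.trans (stdGaussianCDF_sub_stdGaussianCDF (neg_le_self (by positivity)))⟩
end
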